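/- arXiv:2603.24794 — 2 statements merged into one kernel-verified Lean document; each statement's English description precedes it below -/
import Mathlib

section
/- Let L be a Lie algebra over a field of characteristic zero with elements x_1, x_2, x_3, x_4, x_5 such that [x_5,x_3] = -x_1 and [x_5,x_4] = -x_2, and all other brackets among x_1, ..., x_5 are 0 (the Lie algebra 𝔫_{5,1}). Then for all nonnegative integers j, k, l, m, n, p, q, r, s, t, in the universal enveloping algebra U(L) one has (x_1^j x_2^k x_3^l x_4^m x_5^n)(x_1^p x_2^q x_3^r x_4^s x_5^t) = \sum_{\alpha=0}^{\min\{n,r\}} \sum_{\beta=0}^{\min\{n-\alpha,s\}} \binom{n}{\alpha} \binom{r}{\alpha} \binom{n-\alpha}{\beta} \binom{s}{\beta} \alpha! \beta! (-1)^{\alpha+\beta} \, x_1^{j+p+\alpha} x_2^{k+q+\beta} x_3^{l+r-\alpha} x_4^{m+s-\beta} x_5^{n+t-\alpha-\beta}. -/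
/-! In `𝔫_{5,1}` the elements `x₁, x₂` are central and the only non-commuting pairs are
`(x₅, x₃)` and `(x₅, x₄)`, with central commutators `-x₁` and `-x₂`. After moving the powers of
`x₁, x₂` to the front, the product therefore reduces to moving `x₅ⁿ` past `x₃ʳ` and then past
`x₄ˢ`. If `e c = c e + a` with `a` commuting with `c` and `e`, then `e cᵐ = cᵐ e + m cᵐ⁻¹ a`, and
induction on `n` with Pascal's rule gives
`eⁿ cʳ = ∑ α, C(n, α) · r(r-1)⋯(r-α+1) · aᵅ cʳ⁻ᵅ eⁿ⁻ᵅ`; applied twice this is the double sum. -/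

open UniversalEnvelopingAlgebra Finset
open scoped Nat

section Reordering

variable {R : Type*} [Ring R] {a c e : R}

theorem mul_pow_eq_pow_mul_add_nsmul (h : e * c = c * e + a) (hac : Commute a c) (m : ℕ) :
    e * c ^ m = c ^ m * e + m • (c ^ (m - 1) * a) := by
  induction m with
  | zero => simp
  | succ m ih =>
    have hshift : m • (c ^ (m - 1) * a * c) = m • (c ^ m * a) := by
      rcases m with _ | m
      · simp
      · rw [mul_assoc, hac.eq, ← mul_assoc, ← pow_succ, Nat.add_sub_cancel]
    calc e * c ^ (m + 1) = (e * c ^ m) * c := by rw [pow_succ, mul_assoc]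
      _ = c ^ m * (e * c) + m • (c ^ (m - 1) * a * c) := by
        rw [ih, add_mul, mul_assoc, smul_mul_assoc]
      _ = c ^ (m + 1) * e + (m + 1) • (c ^ m * a) := by
        rw [h, hshift, mul_add, ← mul_assoc, ← pow_succ, succ_nsmul', add_assoc]
      _ = _ := by rw [Nat.add_sub_cancel]

theorem mul_pow_mul_pow_mul_pow_eq_add_nsmul (h : e * c = c * e + a) (hac : Commute a c)
    (hae : Commute a e) (α m N : ℕ) :
    e * (a ^ α * c ^ m * e ^ N) =
      a ^ α * c ^ m * e ^ (N + 1) + m • (a ^ (α + 1) * c ^ (m - 1) * e ^ N) := by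
  rw [← mul_assoc, ← mul_assoc, ((hae.pow_left α).eq).symm, mul_assoc _ e,
    mul_pow_eq_pow_mul_add_nsmul h hac, mul_add, add_mul, pow_succ' e, mul_smul_comm,
    smul_mul_assoc, ← (hac.pow_right (m - 1)).eq, ← mul_assoc, ← mul_assoc, ← mul_assoc, ← pow_succ]

theorem pow_mul_pow_eq_sum_range (h : e * c = c * e + a) (hac : Commute a c)
    (hae : Commute a e) (r n : ℕ) :
    e ^ n * c ^ r = ∑ α ∈ range (n + 1),
      n.choose α • r.descFactorial α • (a ^ α * c ^ (r - α) * e ^ (n - α)) := by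
  set f : ℕ → ℕ → R := fun α N => r.descFactorial α • (a ^ α * c ^ (r - α) * e ^ N) with hf
  have hstep : ∀ α N, e * f α N = f α (N + 1) + f (α + 1) N := by
    intro α N
    simp only [hf]
    rw [mul_smul_comm, mul_pow_mul_pow_mul_pow_eq_add_nsmul h hac hae, smul_add, smul_smul,
      Nat.descFactorial_succ, mul_comm, Nat.sub_sub]
  change e ^ n * c ^ r = ∑ α ∈ range (n + 1), n.choose α • f α (n - α)
  induction n with
  | zero => simp [hf]
  | succ n ih =>
    rw [sum_choose_succ_nsmul, ← sum_add_distrib, pow_succ', mul_assoc, ih, mul_sum]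
    refine sum_congr rfl fun α hα => ?_
    rw [mul_smul_comm, hstep, smul_add, Nat.sub_add_comm (mem_range_succ_iff.mp hα)]

end Reordering

section Signed

variable {K A : Type*} [CommRing K] [Ring A] [Algebra K A] {a c e : A}

theorem pow_mul_pow_mul_eq_sum_of_mul_sub_mul_eq_neg (h : e * c - c * e = -a)
    (hac : Commute a c) (hae : Commute a e) (n r : ℕ) (X : A) :
    e ^ n * (c ^ r * X) = ∑ α ∈ range (min n r + 1),
      ((-1 : K) ^ α * ((n.choose α * r.choose α * α ! : ℕ) : K)) •
        (a ^ α * (c ^ (r - α) * (e ^ (n - α) * X))) := by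
  have h' : e * c = c * e + -a := by rw [← h]; abel
  rw [← mul_assoc, pow_mul_pow_eq_sum_range h' hac.neg_left hae.neg_left, sum_mul]
  have hvanish : ∀ α ∈ range (n + 1), α ∉ range (min n r + 1) →
      (n.choose α • r.descFactorial α • ((-a) ^ α * c ^ (r - α) * e ^ (n - α))) * X = 0 := by
    intro α hα hα'
    simp only [mem_range] at hα hα'
    rw [Nat.descFactorial_eq_zero_iff_lt.mpr (by omega), zero_smul, smul_zero, zero_mul]
  rw [← sum_subset (range_subset_range.mpr (by omega)) hvanish]
  refine sum_congr rfl fun α _ => ?_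
  rw [← neg_one_smul K a, smul_pow, Nat.descFactorial_eq_factorial_mul_choose, smul_smul,
    ← Nat.cast_smul_eq_nsmul K]
  simp only [smul_mul_assoc, smul_smul, mul_assoc]
  congr 1
  push_cast
  ring

end Signed

section Sorting

variable {M : Type*} [Monoid M]

theorem pow_mul_pow_mul (x y : M) (i j : ℕ) : x ^ i * (x ^ j * y) = x ^ (i + j) * y := by
  rw [← mul_assoc, ← pow_add]

theorem Commute.pow_mul_pow_mul_left_comm {a b : M} (h : Commute a b) (i j : ℕ) (x : M) :
    b ^ i * (a ^ j * x) = a ^ j * (b ^ i * x) :=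
  (h.pow_pow j i).symm.left_comm x

end Sorting

theorem n51_monomial_mul_monomial {K A : Type*} [CommRing K] [Ring A] [Algebra K A]
    {u v w z e : A} (hew : e * w - w * e = -u) (hez : e * z - z * e = -v)
    (huv : Commute u v) (huw : Commute u w) (huz : Commute u z) (hue : Commute u e)
    (hvw : Commute v w) (hvz : Commute v z) (hve : Commute v e) (hwz : Commute w z)
    (j k l m n p q r s t : ℕ) :
    (u ^ j * v ^ k * w ^ l * z ^ m * e ^ n) * (u ^ p * v ^ q * w ^ r * z ^ s * e ^ t) =
      ∑ α ∈ range (min n r + 1), ∑ β ∈ range (min (n - α) s + 1),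
        ((-1 : K) ^ (α + β) *
          ((n.choose α * r.choose α * (n - α).choose β * s.choose β * α ! * β ! : ℕ) : K)) •
          (u ^ (j + p + α) * v ^ (k + q + β) * w ^ (l + r - α) * z ^ (m + s - β) *
            e ^ (n + t - α - β)) := by
  calc (u ^ j * v ^ k * w ^ l * z ^ m * e ^ n) * (u ^ p * v ^ q * w ^ r * z ^ s * e ^ t)
      = u ^ (j + p) * (v ^ (k + q) * (w ^ l * (z ^ m * (e ^ n * (w ^ r * (z ^ s * e ^ t)))))) := by
        simp only [mul_assoc, huv.pow_mul_pow_mul_left_comm, huw.pow_mul_pow_mul_left_comm,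
          huz.pow_mul_pow_mul_left_comm, hue.pow_mul_pow_mul_left_comm,
          hvw.pow_mul_pow_mul_left_comm, hvz.pow_mul_pow_mul_left_comm,
          hve.pow_mul_pow_mul_left_comm, pow_mul_pow_mul]
    _ = ∑ α ∈ range (min n r + 1), ∑ β ∈ range (min (n - α) s + 1),
          (((-1 : K) ^ α * ((n.choose α * r.choose α * α ! : ℕ) : K)) *
            ((-1 : K) ^ β * (((n - α).choose β * s.choose β * β ! : ℕ) : K))) •
          (u ^ (j + p) * (v ^ (k + q) * (w ^ l * (z ^ m * (u ^ α * (w ^ (r - α) *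
            (v ^ β * (z ^ (s - β) * (e ^ (n - α - β) * e ^ t))))))))) := by
        rw [pow_mul_pow_mul_eq_sum_of_mul_sub_mul_eq_neg (K := K) hew huw hue]
        simp only [mul_sum, mul_smul_comm]
        refine sum_congr rfl fun α _ => ?_
        rw [pow_mul_pow_mul_eq_sum_of_mul_sub_mul_eq_neg (K := K) hez hvz hve]
        simp only [mul_sum, smul_sum, mul_smul_comm, smul_smul]
    _ = _ := by
        refine sum_congr rfl fun α hα => sum_congr rfl fun β hβ => ?_
        simp only [mem_range] at hα hβ
        rw [show l + r - α = l + (r - α) by omega, show m + s - β = m + (s - β) by omega,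
          show n + t - α - β = n - α - β + t by omega, pow_add e]
        congr 1
        · push_cast
          ring
        · simp only [mul_assoc, huv.pow_mul_pow_mul_left_comm, huw.pow_mul_pow_mul_left_comm,
            huz.pow_mul_pow_mul_left_comm, hvw.pow_mul_pow_mul_left_comm,
            hvz.pow_mul_pow_mul_left_comm, hwz.pow_mul_pow_mul_left_comm, pow_mul_pow_mul]

namespace UniversalEnvelopingAlgebra

variable {R L : Type*} [CommRing R] [LieRing L] [LieAlgebra R L]

theorem ι_lie (x y : L) : ι R ⁅x, y⁆ = ι R x * ι R y - ι R y * ι R x := by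
  let _ : LieRing (UniversalEnvelopingAlgebra R L) := LieRing.ofAssociativeRing
  exact ((ι R).map_lie x y).trans (Ring.lie_def _ _)

theorem commute_ι_of_lie_eq_zero {x y : L} (h : ⁅x, y⁆ = 0) : Commute (ι R x) (ι R y) :=
  sub_eq_zero.mp (by rw [← ι_lie, h, map_zero])

theorem ι_mul_sub_mul_eq_neg {x y z : L} (h : ⁅x, y⁆ = -z) :
    ι R x * ι R y - ι R y * ι R x = -ι R z := by
  rw [← ι_lie, h, map_neg]

end UniversalEnvelopingAlgebra

theorem stmt_11_general {K : Type*} [Field K]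
    {L : Type*} [LieRing L] [LieAlgebra K L]
    (x1 x2 x3 x4 x5 : L)
    (h53 : ⁅x5, x3⁆ = -x1) (h54 : ⁅x5, x4⁆ = -x2)
    (h12 : ⁅x1, x2⁆ = 0) (h13 : ⁅x1, x3⁆ = 0) (h14 : ⁅x1, x4⁆ = 0) (h15 : ⁅x1, x5⁆ = 0)
    (h23 : ⁅x2, x3⁆ = 0) (h24 : ⁅x2, x4⁆ = 0) (h25 : ⁅x2, x5⁆ = 0) (h34 : ⁅x3, x4⁆ = 0)
    (j k l m n p q r s t : ℕ) :
    ((ι K x1 : UniversalEnvelopingAlgebra K L) ^ (j) * (ι K x2 : UniversalEnvelopingAlgebra K L) ^ (k) * (ι K x3 : UniversalEnvelopingAlgebra K L) ^ (l) * (ι K x4 : UniversalEnvelopingAlgebra K L) ^ (m) * (ι K x5 : UniversalEnvelopingAlgebra K L) ^ (n))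
      * ((ι K x1 : UniversalEnvelopingAlgebra K L) ^ (p) * (ι K x2 : UniversalEnvelopingAlgebra K L) ^ (q) * (ι K x3 : UniversalEnvelopingAlgebra K L) ^ (r) * (ι K x4 : UniversalEnvelopingAlgebra K L) ^ (s) * (ι K x5 : UniversalEnvelopingAlgebra K L) ^ (t)) =
      ∑ α ∈ Finset.range (min n r + 1), ∑ β ∈ Finset.range (min (n - α) s + 1),
        ((-1 : K) ^ (α + β) *
          ((n.choose α * r.choose α * (n - α).choose β * s.choose β
            * α.factorial * β.factorial : ℕ) : K)) •
          ((ι K x1 : UniversalEnvelopingAlgebra K L) ^ (j + p + α) * (ι K x2 : UniversalEnvelopingAlgebra K L) ^ (k + q + β) * (ι K x3 : UniversalEnvelopingAlgebra K L) ^ (l + r - α)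
            * (ι K x4 : UniversalEnvelopingAlgebra K L) ^ (m + s - β) * (ι K x5 : UniversalEnvelopingAlgebra K L) ^ (n + t - α - β)) := by
  exact n51_monomial_mul_monomial (ι_mul_sub_mul_eq_neg h53) (ι_mul_sub_mul_eq_neg h54)
    (commute_ι_of_lie_eq_zero h12) (commute_ι_of_lie_eq_zero h13) (commute_ι_of_lie_eq_zero h14)
    (commute_ι_of_lie_eq_zero h15) (commute_ι_of_lie_eq_zero h23) (commute_ι_of_lie_eq_zero h24)
    (commute_ι_of_lie_eq_zero h25) (commute_ι_of_lie_eq_zero h34) j k l m n p q r s t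

theorem stmt_11 {K : Type*} [Field K] [CharZero K]
    {L : Type*} [LieRing L] [LieAlgebra K L]
    (x1 x2 x3 x4 x5 : L)
    (h53 : ⁅x5, x3⁆ = -x1) (h54 : ⁅x5, x4⁆ = -x2)
    (h12 : ⁅x1, x2⁆ = 0) (h13 : ⁅x1, x3⁆ = 0) (h14 : ⁅x1, x4⁆ = 0) (h15 : ⁅x1, x5⁆ = 0)
    (h23 : ⁅x2, x3⁆ = 0) (h24 : ⁅x2, x4⁆ = 0) (h25 : ⁅x2, x5⁆ = 0) (h34 : ⁅x3, x4⁆ = 0)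
    (j k l m n p q r s t : ℕ) :
    ((ι K x1 : UniversalEnvelopingAlgebra K L) ^ (j) * (ι K x2 : UniversalEnvelopingAlgebra K L) ^ (k) * (ι K x3 : UniversalEnvelopingAlgebra K L) ^ (l) * (ι K x4 : UniversalEnvelopingAlgebra K L) ^ (m) * (ι K x5 : UniversalEnvelopingAlgebra K L) ^ (n))
      * ((ι K x1 : UniversalEnvelopingAlgebra K L) ^ (p) * (ι K x2 : UniversalEnvelopingAlgebra K L) ^ (q) * (ι K x3 : UniversalEnvelopingAlgebra K L) ^ (r) * (ι K x4 : UniversalEnvelopingAlgebra K L) ^ (s) * (ι K x5 : UniversalEnvelopingAlgebra K L) ^ (t)) =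
      ∑ α ∈ Finset.range (min n r + 1), ∑ β ∈ Finset.range (min (n - α) s + 1),
        ((-1 : K) ^ (α + β) *
          ((n.choose α * r.choose α * (n - α).choose β * s.choose β
            * α.factorial * β.factorial : ℕ) : K)) •
          ((ι K x1 : UniversalEnvelopingAlgebra K L) ^ (j + p + α) * (ι K x2 : UniversalEnvelopingAlgebra K L) ^ (k + q + β) * (ι K x3 : UniversalEnvelopingAlgebra K L) ^ (l + r - α)
            * (ι K x4 : UniversalEnvelopingAlgebra K L) ^ (m + s - β) * (ι K x5 : UniversalEnvelopingAlgebra K L) ^ (n + t - α - β)) :=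
  stmt_11_general x1 x2 x3 x4 x5 h53 h54 h12 h13 h14 h15 h23 h24 h25 h34 j k l m n p q r s t
end

section
/- Let L be a Lie algebra over a field of characteristic zero with elements x_1, x_2, x_3, x_4, x_5 such that [x_4,x_3] = -x_1, [x_5,x_2] = -x_1, and [x_5,x_4] = -x_2, and all other brackets among x_1, ..., x_5 are 0 (the Lie algebra 𝔫_{5,4}). Then for all nonnegative integers j, k, l, m, n, p, q, r, s, t, in the universal enveloping algebra U(L) one has (x_1^j x_2^k x_3^l x_4^m x_5^n)(x_1^p x_2^q x_3^r x_4^s x_5^t) = \sum_{\alpha=0}^{\min\{n,q\}} \sum_{\beta_1,\beta_2 \ge 0,\ \beta_1+\beta_2 \le s,\ \beta_1+2\beta_2 \le n-\alpha} \sum_{\gamma=0}^{\min\{m,r\}} \binom{n}{\alpha} \binom{q}{\alpha} \binom{s}{\beta_1+\beta_2} \binom{n-\alpha}{\beta_1+2\beta_2} \binom{\beta_1+\beta_2}{\beta_1} \binom{m}{\gamma} \binom{r}{\gamma} \alpha! \frac{(\beta_1+2\beta_2)!}{2^{\beta_2}} \gamma! (-1)^{\alpha+\beta_1+\gamma} \,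 x_1^{j+p+\alpha+\beta_2+\gamma} x_2^{k+q-\alpha+\beta_1} x_3^{l+r-\gamma} x_4^{m+s-\gamma-\beta_1-\beta_2} x_5^{n+t-\alpha-\beta_1-2\beta_2}. -/
/-!
Write `Xᵢ` for the image of `xᵢ` in `U(L)`. The brackets become `X₄ X₃ = X₃ X₄ - X₁`,
`X₅ X₂ = X₂ X₅ - X₁` and `X₅ X₄ = X₄ X₅ - X₂`, all other pairs commute, and the identity holds in
any associative algebra with such elements. Since `X₁` commutes with everything, only three
reorderings are needed: `X₅ ^ n` past `X₂ ^ q` and `X₄ ^ m` past `X₃ ^ r` are Heisenberg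
reorderings with the central commutator `X₁`, giving the terms indexed by `α` and `γ`; then
`X₅ ^ (n - α)` past `X₄ ^ s` produces `X₂`s, which the remaining `X₅`s turn into `X₁`s. The
coefficients of this last expansion satisfy a Pascal-type recursion in the power of `X₅`, which
gives them by induction. In the final sum, every truncated subtraction in an exponent comes with a
vanishing coefficient, which accounts for the ranges and side conditions.
-/

open UniversalEnvelopingAlgebra Finset

section ShiftedSums

variable {M : Type*} [AddCommMonoid M]

theorem sum_range_succ_eq_sum_ite_pred (n : ℕ) (g : ℕ → M) (hg : g n = 0) :
    ∑ i ∈ range (n + 1), g i = ∑ i ∈ range (n + 1), if i = 0 then 0 else g (i - 1) := by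
  rw [sum_range_succ, hg, add_zero, sum_range_succ']
  simp

theorem sum_range_succ_comp_succ (n : ℕ) (g : ℕ → M) (h0 : g 0 = 0) (htop : g (n + 1) = 0) :
    ∑ i ∈ range (n + 1), g (i + 1) = ∑ i ∈ range (n + 1), g i := by
  rw [← add_zero (∑ i ∈ range (n + 1), g (i + 1)), ← h0, ← sum_range_succ', sum_range_succ, htop,
    add_zero]

end ShiftedSums

/-- The coefficient of `X₁ ^ β₂ * X₂ ^ β₁ * X₄ ^ (s - β₁ - β₂) * X₅ ^ (N - β₁ - 2 * β₂)` in
`X₅ ^ N * X₄ ^ s`. -/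
def swapCoeff (K : Type*) [Field K] (s N β₁ β₂ : ℕ) : K :=
  (-1 : K) ^ β₁ * (s.choose (β₁ + β₂) * N.choose (β₁ + 2 * β₂) * (β₁ + β₂).choose β₁ *
    (β₁ + 2 * β₂).factorial : ℕ) / 2 ^ β₂

namespace swapCoeff

variable {K : Type*} [Field K]

theorem eq_zero_of_lt_add {s N β₁ β₂ : ℕ} (h : s < β₁ + β₂) : swapCoeff K s N β₁ β₂ = 0 := by
  simp [swapCoeff, Nat.choose_eq_zero_of_lt h]

theorem eq_zero_of_lt_add_two_mul {s N β₁ β₂ : ℕ} (h : N < β₁ + 2 * β₂) :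
    swapCoeff K s N β₁ β₂ = 0 := by
  simp [swapCoeff, Nat.choose_eq_zero_of_lt h]

theorem zero_zero_zero (s : ℕ) : swapCoeff K s 0 0 0 = 1 := by
  simp [swapCoeff]

variable [CharZero K]

theorem succ_succ_succ (s N b c : ℕ) : swapCoeff K s (N + 1) (b + 1) (c + 1)
    = swapCoeff K s N (b + 1) (c + 1) - swapCoeff K s N b (c + 1) * (s - b - (c + 1) : ℕ)
      - swapCoeff K s N (b + 2) c * (b + 2 : ℕ) := by
  have k1 : (b + c + 1 + 1).choose (b + 2) * (b + 2)
      = (b + c + 1 + 1).choose (b + 1) * (c + 1) := by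
    have h := Nat.choose_succ_right_eq (b + c + 1 + 1) (b + 1)
    rwa [show b + c + 1 + 1 - (b + 1) = c + 1 by omega] at h
  have k2 : (s - b - (c + 1)) * (s.choose (b + c + 1) * (b + c + 1).choose b)
      = s.choose (b + c + 1 + 1) * (b + c + 1 + 1).choose (b + 1) * (b + 1) := by
    have h1 := Nat.choose_succ_right_eq s (b + c + 1)
    have h2 := Nat.add_one_mul_choose_eq (b + c + 1) b
    rw [show s - b - (c + 1) = s - (b + c + 1) by omega]
    calc (s - (b + c + 1)) * (s.choose (b + c + 1) * (b + c + 1).choose b)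
        = s.choose (b + c + 1 + 1) * ((b + c + 1 + 1) * (b + c + 1).choose b) := by
          rw [← mul_assoc, mul_comm (s - _), ← h1, mul_assoc]
      _ = _ := by rw [h2, mul_assoc]
  have k1K : ((b + c + 1 + 1).choose (b + 2) : K) * (b + 2 : K)
      = ((b + c + 1 + 1).choose (b + 1) : K) * (c + 1 : K) := by exact_mod_cast k1
  have k2K : ((s - b - (c + 1) : ℕ) : K) * ((s.choose (b + c + 1) : K) * ((b + c + 1).choose b : K))
      = (s.choose (b + c + 1 + 1) : K) * ((b + c + 1 + 1).choose (b + 1) : K) * (b + 1 : K) := by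
    exact_mod_cast k2
  simp only [swapCoeff]
  rw [show b + 1 + 2 * (c + 1) = b + 2 * c + 2 + 1 by ring,
    show b + 2 * (c + 1) = b + 2 * c + 2 by ring, show b + 2 + 2 * c = b + 2 * c + 2 by ring,
    show b + 1 + (c + 1) = b + c + 1 + 1 by ring, show b + (c + 1) = b + c + 1 by ring,
    show b + 2 + c = b + c + 1 + 1 by ring,
    Nat.choose_succ_succ N (b + 2 * c + 2), Nat.factorial_succ (b + 2 * c + 2)]
  push_cast
  linear_combination
    ((-1 : K) ^ b * (N.choose (b + 2 * c + 2) : K) * ((b + 2 * c + 2).factorial : K)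
      / 2 ^ (c + 1)) * k2K
    + ((-1 : K) ^ b * (N.choose (b + 2 * c + 2) : K) * ((b + 2 * c + 2).factorial : K)
      * (s.choose (b + c + 1 + 1) : K) / 2 ^ c) * k1K

/-- The `if`s stand for coefficients with a negative index. -/
theorem succ (s N β₁ β₂ : ℕ) : swapCoeff K s (N + 1) β₁ β₂
    = swapCoeff K s N β₁ β₂
      - (if β₁ = 0 then 0 else swapCoeff K s N (β₁ - 1) β₂ * (s - (β₁ - 1) - β₂ : ℕ))
      - (if β₂ = 0 then 0 else swapCoeff K s N (β₁ + 1) (β₂ - 1) * (β₁ + 1 : ℕ)) := by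
  rcases β₁ with _ | b <;> rcases β₂ with _ | c
  · simp [swapCoeff]
  · simp only [if_pos, if_neg (Nat.succ_ne_zero c), Nat.add_sub_cancel, sub_zero]
    simp only [swapCoeff, zero_add]
    rw [show 2 * (c + 1) = 2 * c + 1 + 1 by ring, show 1 + 2 * c = 2 * c + 1 by ring,
      show 1 + c = c + 1 by ring, Nat.choose_succ_succ N (2 * c + 1),
      Nat.factorial_succ (2 * c + 1), Nat.choose_zero_right, Nat.choose_one_right]
    push_cast
    field_simp
    ring
  · have key : (s.choose (b + 1) : K) * (b + 1) = s.choose b * (s - b : ℕ) := by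
      exact_mod_cast Nat.choose_succ_right_eq s b
    simp only [if_pos, if_neg (Nat.succ_ne_zero b), Nat.add_sub_cancel, sub_zero]
    simp only [swapCoeff, Nat.mul_zero, Nat.add_zero, Nat.choose_self, Nat.sub_zero, pow_zero,
      div_one, Nat.choose_succ_succ N b, Nat.factorial_succ b]
    push_cast
    linear_combination ((-1 : K) ^ (b + 1) * (N.choose b : K) * (b.factorial : K)) * key
  · simpa [add_assoc, one_add_one_eq_two] using succ_succ_succ (K := K) s N b c

end swapCoeff

section Reordering

variable {A : Type*} [Ring A]

theorem mul_pow_eq_of_mul_eq_sub {u v w : A} (h : v * u = u * v - w) (hwu : Commute u w)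
    (j : ℕ) : v * u ^ j = u ^ j * v - j • (u ^ (j - 1) * w) := by
  induction j with
  | zero => simp
  | succ i ih =>
    rcases i with _ | i
    · simpa using h
    · rw [pow_succ, ← mul_assoc, ih, sub_mul, mul_assoc, h, mul_sub, ← mul_assoc, ← pow_succ,
        smul_mul_assoc, mul_assoc, ← hwu.eq, ← mul_assoc, ← pow_succ]
      simp only [Nat.add_sub_cancel, succ_nsmul]
      abel

theorem mul_pow_mul_pow_eq_of_mul_eq_sub {u v w : A} (h : v * u = u * v - w)
    (hwu : Commute u w) (hwv : Commute v w) {n : ℕ} (α q : ℕ) (hα : α ≤ n) :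
    v * (w ^ α * u ^ (q - α) * v ^ (n - α)) = w ^ α * u ^ (q - α) * v ^ (n + 1 - α)
      - (q - α) • (w ^ (α + 1) * u ^ (q - (α + 1)) * v ^ (n + 1 - (α + 1))) := by
  rw [← mul_assoc, ← mul_assoc, (hwv.pow_right α).eq, mul_assoc _ v,
    mul_pow_eq_of_mul_eq_sub h hwu, mul_sub, sub_mul, mul_smul_comm, smul_mul_assoc,
    (hwu.pow_left _).eq, Nat.sub_sub, Nat.add_sub_add_right, show n + 1 - α = n - α + 1 by omega,
    pow_succ' v (n - α)]
  simp only [pow_succ, mul_assoc]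

variable {R : Type*} [CommRing R] [Algebra R A]

theorem pow_mul_pow_eq_sum_of_mul_eq_sub {u v w : A} (h : v * u = u * v - w)
    (hwu : Commute u w) (hwv : Commute v w) (q n : ℕ) :
    v ^ n * u ^ q = ∑ α ∈ range (n + 1),
      ((-1 : R) ^ α * (n.choose α * q.descFactorial α : ℕ)) •
        (w ^ α * u ^ (q - α) * v ^ (n - α)) := by
  induction n with
  | zero => simp
  | succ n ih =>
    set c : ℕ → ℕ → R := fun N α ↦ (-1 : R) ^ α * (N.choose α * q.descFactorial α : ℕ)
    set m : ℕ → A := fun α ↦ w ^ α * u ^ (q - α) * v ^ (n + 1 - α)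
    have hc : ∀ α, c (n + 1) (α + 1) = c n (α + 1) - c n α * (q - α : ℕ) := fun α ↦ by
      simp only [c, Nat.choose_succ_succ', Nat.descFactorial_succ]
      push_cast
      ring
    have hstep : v ^ (n + 1) * u ^ q
        = ∑ α ∈ range (n + 1), c n α • m α
          - ∑ α ∈ range (n + 1), (c n α * (q - α : ℕ)) • m (α + 1) := by
      rw [pow_succ', mul_assoc, ih, mul_sum, ← sum_sub_distrib]
      refine sum_congr rfl fun α hα ↦ ?_
      rw [mul_smul_comm,
        mul_pow_mul_pow_eq_of_mul_eq_sub h hwu hwv α q (Nat.lt_succ_iff.1 (mem_range.1 hα)),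
        smul_sub, ← Nat.cast_smul_eq_nsmul R, smul_smul]
    have htop : ∑ α ∈ range (n + 1), c n α • m α = ∑ α ∈ range (n + 2), c n α • m α := by
      simp [sum_range_succ _ (n + 1), c]
    change _ = ∑ α ∈ range (n + 2), c (n + 1) α • m α
    rw [hstep, htop, sum_range_succ' _ (n + 1), sum_range_succ' _ (n + 1), add_sub_right_comm,
      ← sum_sub_distrib]
    simp only [hc, sub_smul]
    simp [c]

end Reordering

section SwapReordering

variable {A : Type*} [Ring A] {X₁ X₂ X₄ X₅ : A}

theorem mul_monomial_of_mul_eq_sub (h54 : X₅ * X₄ = X₄ * X₅ - X₂) (h52 : X₅ * X₂ = X₂ * X₅ - X₁)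
    (c12 : Commute X₁ X₂) (c15 : Commute X₁ X₅) (c24 : Commute X₂ X₄) (a b c d : ℕ) :
    X₅ * (X₁ ^ a * X₂ ^ b * X₄ ^ c * X₅ ^ d)
      = X₁ ^ a * X₂ ^ b * X₄ ^ c * X₅ ^ (d + 1)
        - c • (X₁ ^ a * X₂ ^ (b + 1) * X₄ ^ (c - 1) * X₅ ^ d)
        - b • (X₁ ^ (a + 1) * X₂ ^ (b - 1) * X₄ ^ c * X₅ ^ d) := by
  simp only [mul_assoc]
  rw [(c15.symm.pow_right a).left_comm, ← mul_assoc X₅, mul_pow_eq_of_mul_eq_sub h52 c12.symm,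
    sub_mul, mul_assoc, ← mul_assoc X₅, mul_pow_eq_of_mul_eq_sub h54 c24.symm, sub_mul, mul_assoc,
    ← pow_succ']
  simp only [mul_sub, mul_smul_comm, smul_mul_assoc, mul_assoc]
  rw [(c24.symm.pow_left (c - 1)).left_comm, (c12.symm.pow_left (b - 1)).left_comm]
  simp only [← mul_assoc, ← pow_succ]

def swapMonomial (X₁ X₂ X₄ X₅ : A) (s N β₁ β₂ : ℕ) : A :=
  X₁ ^ β₂ * X₂ ^ β₁ * X₄ ^ (s - β₁ - β₂) * X₅ ^ (N - β₁ - 2 * β₂)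

theorem mul_swapMonomial (h54 : X₅ * X₄ = X₄ * X₅ - X₂) (h52 : X₅ * X₂ = X₂ * X₅ - X₁)
    (c12 : Commute X₁ X₂) (c15 : Commute X₁ X₅) (c24 : Commute X₂ X₄) {s N β₁ β₂ : ℕ}
    (h : β₁ + 2 * β₂ ≤ N) :
    X₅ * swapMonomial X₁ X₂ X₄ X₅ s N β₁ β₂
      = swapMonomial X₁ X₂ X₄ X₅ s (N + 1) β₁ β₂
        - (s - β₁ - β₂) • swapMonomial X₁ X₂ X₄ X₅ s (N + 1) (β₁ + 1) β₂
        - β₁ • swapMonomial X₁ X₂ X₄ X₅ s (N + 1) (β₁ - 1) (β₂ + 1) := by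
  rw [swapMonomial, mul_monomial_of_mul_eq_sub h54 h52 c12 c15 c24]
  simp only [swapMonomial]
  rw [show N - β₁ - 2 * β₂ + 1 = N + 1 - β₁ - 2 * β₂ by omega,
    show s - (β₁ + 1) - β₂ = s - β₁ - β₂ - 1 by omega,
    show N + 1 - (β₁ + 1) - 2 * β₂ = N - β₁ - 2 * β₂ by omega]
  obtain rfl | hβ₁ := Nat.eq_zero_or_pos β₁
  · simp
  · rw [show s - (β₁ - 1) - (β₂ + 1) = s - β₁ - β₂ by omega,
      show N + 1 - (β₁ - 1) - 2 * (β₂ + 1) = N - β₁ - 2 * β₂ by omega]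

variable {K : Type*} [Field K] [CharZero K] [Algebra K A]

theorem pow_mul_pow_eq_sum_swapCoeff (h54 : X₅ * X₄ = X₄ * X₅ - X₂)
    (h52 : X₅ * X₂ = X₂ * X₅ - X₁) (c12 : Commute X₁ X₂) (c15 : Commute X₁ X₅)
    (c24 : Commute X₂ X₄) (s N : ℕ) :
    X₅ ^ N * X₄ ^ s = ∑ β₁ ∈ range (s + 1), ∑ β₂ ∈ range (s + 1),
      swapCoeff K s N β₁ β₂ • swapMonomial X₁ X₂ X₄ X₅ s N β₁ β₂ := by
  induction N with
  | zero =>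
    rw [pow_zero, one_mul,
      sum_eq_single_of_mem 0 (by simp) fun β₁ _ hβ₁ ↦ sum_eq_zero fun β₂ _ ↦ ?_,
      sum_eq_single_of_mem 0 (by simp) fun β₂ _ hβ₂ ↦ ?_, swapCoeff.zero_zero_zero]
    · simp [swapMonomial]
    · rw [swapCoeff.eq_zero_of_lt_add_two_mul (by omega), zero_smul]
    · rw [swapCoeff.eq_zero_of_lt_add_two_mul (by omega), zero_smul]
  | succ N ih =>
    set d := swapCoeff K s N
    set m := swapMonomial X₁ X₂ X₄ X₅ s (N + 1)
    have hterm (β₁ β₂ : ℕ) : X₅ * (d β₁ β₂ • swapMonomial X₁ X₂ X₄ X₅ s N β₁ β₂)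
        = d β₁ β₂ • m β₁ β₂ - (d β₁ β₂ * (s - β₁ - β₂ : ℕ)) • m (β₁ + 1) β₂
          - (d β₁ β₂ * β₁) • m (β₁ - 1) (β₂ + 1) := by
      by_cases hN : β₁ + 2 * β₂ ≤ N
      · rw [mul_smul_comm, mul_swapMonomial h54 h52 c12 c15 c24 hN, smul_sub, smul_sub,
          ← Nat.cast_smul_eq_nsmul K, ← Nat.cast_smul_eq_nsmul K, smul_smul, smul_smul]
      · simp [d, swapCoeff.eq_zero_of_lt_add_two_mul (not_le.mp hN)]
    have hfst : ∑ β₁ ∈ range (s + 1), ∑ β₂ ∈ range (s + 1),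
          (d β₁ β₂ * (s - β₁ - β₂ : ℕ)) • m (β₁ + 1) β₂
        = ∑ β₁ ∈ range (s + 1), ∑ β₂ ∈ range (s + 1),
          (if β₁ = 0 then 0 else d (β₁ - 1) β₂ * (s - (β₁ - 1) - β₂ : ℕ)) • m β₁ β₂ := by
      rw [sum_range_succ_eq_sum_ite_pred s _ (by simp)]
      refine sum_congr rfl fun β₁ _ ↦ ?_
      split_ifs with hβ₁
      · simp
      · rw [Nat.sub_add_cancel (Nat.pos_of_ne_zero hβ₁)]
    have hsnd : ∑ β₁ ∈ range (s + 1), ∑ β₂ ∈ range (s + 1), (d β₁ β₂ * β₁) • m (β₁ - 1) (β₂ + 1)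
        = ∑ β₁ ∈ range (s + 1), ∑ β₂ ∈ range (s + 1),
          (if β₂ = 0 then 0 else d (β₁ + 1) (β₂ - 1) * (β₁ + 1 : ℕ)) • m β₁ β₂ := by
      rw [← sum_range_succ_comp_succ s _ (by simp) (sum_eq_zero fun β₂ _ ↦ by
        simp [d, swapCoeff.eq_zero_of_lt_add (by omega : s < s + 1 + β₂)])]
      refine sum_congr rfl fun β₁ _ ↦ ?_
      rw [sum_range_succ_eq_sum_ite_pred s _
        (by simp [d, swapCoeff.eq_zero_of_lt_add (by omega : s < β₁ + 1 + s)])]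
      refine sum_congr rfl fun β₂ _ ↦ ?_
      split_ifs with hβ₂
      · simp
      · rw [Nat.sub_add_cancel (Nat.pos_of_ne_zero hβ₂), Nat.add_sub_cancel]
    simp only [swapCoeff.succ, sub_smul, sum_sub_distrib]
    rw [← hfst, ← hsnd, pow_succ', mul_assoc, ih, mul_sum]
    simp only [mul_sum, hterm, sum_sub_distrib]
    rfl

end SwapReordering

/-- The brackets of `𝔫₅,₄` on `X₁, …, X₅`, with `⁅x, y⁆` read as `x * y - y * x`. -/
structure N54Relations {A : Type*} [Ring A] (X₁ X₂ X₃ X₄ X₅ : A) : Prop where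
  mul_43 : X₄ * X₃ = X₃ * X₄ - X₁
  mul_52 : X₅ * X₂ = X₂ * X₅ - X₁
  mul_54 : X₅ * X₄ = X₄ * X₅ - X₂
  commute_12 : Commute X₁ X₂
  commute_13 : Commute X₁ X₃
  commute_14 : Commute X₁ X₄
  commute_15 : Commute X₁ X₅
  commute_23 : Commute X₂ X₃
  commute_24 : Commute X₂ X₄
  commute_35 : Commute X₃ X₅

namespace N54Relations

variable {K : Type*} [Field K] [CharZero K] {A : Type*} [Ring A] [Algebra K A]
  {X₁ X₂ X₃ X₄ X₅ : A}

theorem monomial_mul_monomial_eq_sum (hX : N54Relations X₁ X₂ X₃ X₄ X₅) (j k l m n p q r s t : ℕ) :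
    (X₁ ^ j * X₂ ^ k * X₃ ^ l * X₄ ^ m * X₅ ^ n) * (X₁ ^ p * X₂ ^ q * X₃ ^ r * X₄ ^ s * X₅ ^ t)
      = ∑ α ∈ range (n + 1), ∑ β₁ ∈ range (s + 1), ∑ β₂ ∈ range (s + 1), ∑ γ ∈ range (m + 1),
          ((-1 : K) ^ α * (n.choose α * q.descFactorial α : ℕ) * swapCoeff K s (n - α) β₁ β₂
            * ((-1 : K) ^ γ * (m.choose γ * r.descFactorial γ : ℕ))) •
          (X₁ ^ (j + (p + (α + β₂) + γ)) * (X₂ ^ (k + (q - α + β₁)) * (X₃ ^ (l + (r - γ)) *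
            (X₄ ^ (m - γ + (s - β₁ - β₂)) * X₅ ^ (n - α - β₁ - 2 * β₂ + t))))) := by
  have sw : ∀ {x y : A}, Commute x y → ∀ a b (z : A), y ^ a * (x ^ b * z) = x ^ b * (y ^ a * z) :=
    fun hxy a b z ↦ (hxy.symm.pow_pow a b).left_comm z
  have mg : ∀ (x : A) a b (z : A), x ^ a * (x ^ b * z) = x ^ (a + b) * z := by
    intro x a b z; rw [← mul_assoc, ← pow_add]
  have e52 : ∀ N (z : A), X₅ ^ N * (X₂ ^ q * z) = ∑ α ∈ range (N + 1),
      ((-1 : K) ^ α * (N.choose α * q.descFactorial α : ℕ)) •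
        (X₁ ^ α * (X₂ ^ (q - α) * (X₅ ^ (N - α) * z))) := by
    intro N z
    rw [← mul_assoc, pow_mul_pow_eq_sum_of_mul_eq_sub (R := K) hX.mul_52 hX.commute_12.symm
      hX.commute_15.symm, sum_mul]
    simp only [smul_mul_assoc, mul_assoc]
  have e43 : ∀ N (z : A), X₄ ^ N * (X₃ ^ r * z) = ∑ γ ∈ range (N + 1),
      ((-1 : K) ^ γ * (N.choose γ * r.descFactorial γ : ℕ)) •
        (X₁ ^ γ * (X₃ ^ (r - γ) * (X₄ ^ (N - γ) * z))) := by
    intro N z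
    rw [← mul_assoc, pow_mul_pow_eq_sum_of_mul_eq_sub (R := K) hX.mul_43 hX.commute_13.symm
      hX.commute_14.symm, sum_mul]
    simp only [smul_mul_assoc, mul_assoc]
  have e54 : ∀ N (z : A), X₅ ^ N * (X₄ ^ s * z) = ∑ β₁ ∈ range (s + 1), ∑ β₂ ∈ range (s + 1),
      swapCoeff K s N β₁ β₂ •
        (X₁ ^ β₂ * (X₂ ^ β₁ * (X₄ ^ (s - β₁ - β₂) * (X₅ ^ (N - β₁ - 2 * β₂) * z)))) := by
    intro N z
    rw [← mul_assoc, pow_mul_pow_eq_sum_swapCoeff (K := K) hX.mul_54 hX.mul_52 hX.commute_12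
      hX.commute_15 hX.commute_24, sum_mul]
    simp only [swapMonomial, sum_mul, smul_mul_assoc, mul_assoc]
  -- `X₁` moves to the front; `e52`, `e43`, `e54` perform the three reorderings.
  simp only [mul_assoc]
  simp only [sw hX.commute_12, sw hX.commute_13, sw hX.commute_14, sw hX.commute_15,
    sw hX.commute_23, sw hX.commute_24, sw hX.commute_35, mg, ← pow_add, e52, e43, e54, mul_sum,
    smul_sum, mul_smul_comm, smul_smul]
  refine sum_congr rfl fun α _ ↦ sum_congr rfl fun β₁ _ ↦ sum_congr rfl fun β₂ _ ↦
    sum_congr rfl fun γ _ ↦ ?_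
  congr 1
  ring

theorem monomial_mul_monomial (hX : N54Relations X₁ X₂ X₃ X₄ X₅) (j k l m n p q r s t : ℕ) :
    (X₁ ^ j * X₂ ^ k * X₃ ^ l * X₄ ^ m * X₅ ^ n) * (X₁ ^ p * X₂ ^ q * X₃ ^ r * X₄ ^ s * X₅ ^ t) =
      ∑ α ∈ range (min n q + 1), ∑ β₁ ∈ range (s + 1), ∑ β₂ ∈ range (s + 1),
        if β₁ + β₂ ≤ s ∧ β₁ + 2 * β₂ ≤ n - α then
          ∑ γ ∈ range (min m r + 1),
            ((-1 : K) ^ (α + β₁ + γ) *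
              ((n.choose α * q.choose α * s.choose (β₁ + β₂) * (n - α).choose (β₁ + 2 * β₂)
                * (β₁ + β₂).choose β₁ * m.choose γ * r.choose γ
                * α.factorial * (β₁ + 2 * β₂).factorial * γ.factorial : ℕ) : K) / 2 ^ β₂) •
              (X₁ ^ (j + p + α + β₂ + γ) * X₂ ^ (k + q - α + β₁) * X₃ ^ (l + r - γ)
                * X₄ ^ (m + s - γ - β₁ - β₂) * X₅ ^ (n + t - α - β₁ - 2 * β₂))
        else 0 := by
  have hcoeff : ∀ α β₁ β₂ γ, (-1 : K) ^ (α + β₁ + γ) *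
      ((n.choose α * q.choose α * s.choose (β₁ + β₂) * (n - α).choose (β₁ + 2 * β₂)
        * (β₁ + β₂).choose β₁ * m.choose γ * r.choose γ
        * α.factorial * (β₁ + 2 * β₂).factorial * γ.factorial : ℕ) : K) / 2 ^ β₂
      = (-1 : K) ^ α * (n.choose α * q.descFactorial α : ℕ) * swapCoeff K s (n - α) β₁ β₂
        * ((-1 : K) ^ γ * (m.choose γ * r.descFactorial γ : ℕ)) := fun α β₁ β₂ γ ↦ by
    simp only [swapCoeff, Nat.descFactorial_eq_factorial_mul_choose]
    push_cast
    ring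
  have hq : ∀ {α}, q < α → q.descFactorial α = 0 := Nat.descFactorial_eq_zero_iff_lt.2
  have hr : ∀ {γ}, r < γ → r.descFactorial γ = 0 := Nat.descFactorial_eq_zero_iff_lt.2
  simp only [hcoeff]
  rw [hX.monomial_mul_monomial_eq_sum (K := K),
    ← sum_subset (range_subset_range.2 (by omega : min n q + 1 ≤ n + 1)) fun α hαn hα ↦ ?_]
  · refine sum_congr rfl fun α hα ↦ sum_congr rfl fun β₁ _ ↦ sum_congr rfl fun β₂ _ ↦ ?_
    split_ifs with hβ
    · rw [← sum_subset (range_subset_range.2 (by omega : min m r + 1 ≤ m + 1)) fun γ hγm hγ ↦ ?_]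
      · refine sum_congr rfl fun γ hγ ↦ ?_
        by_cases hqr : α ≤ q ∧ γ ≤ r
        · simp only [mem_range] at hα hγ
          rw [show k + q - α + β₁ = k + (q - α + β₁) by omega,
            show l + r - γ = l + (r - γ) by omega,
            show j + p + α + β₂ + γ = j + (p + (α + β₂) + γ) by omega,
            show m + s - γ - β₁ - β₂ = m - γ + (s - β₁ - β₂) by omega,
            show n + t - α - β₁ - 2 * β₂ = n - α - β₁ - 2 * β₂ + t by omega]
          simp only [mul_assoc]
        · rcases not_and_or.1 hqr with hαq | hγr
          · simp [hq (not_le.1 hαq)]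
          · simp [hr (not_le.1 hγr)]
      · simp only [mem_range] at hγm hγ
        simp [hr (by omega : r < γ)]
    · refine sum_eq_zero fun γ _ ↦ ?_
      rcases not_and_or.1 hβ with h | h
      · simp [swapCoeff.eq_zero_of_lt_add (not_le.1 h)]
      · simp [swapCoeff.eq_zero_of_lt_add_two_mul (not_le.1 h)]
  · simp only [mem_range] at hαn hα
    simp [hq (by omega : q < α)]

end N54Relations

theorem UniversalEnvelopingAlgebra.ι_mul_ι {R : Type*} [CommRing R] {L : Type*} [LieRing L]
    [LieAlgebra R L] (x y : L) :
    (ι R x : UniversalEnvelopingAlgebra R L) * ι R y = ι R y * ι R x + ι R ⁅x, y⁆ := by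
  let := LieRing.ofAssociativeRing (A := UniversalEnvelopingAlgebra R L)
  rw [LieHom.map_lie, Ring.lie_def]
  abel

theorem N54Relations.of_lie {R : Type*} [CommRing R] {L : Type*} [LieRing L] [LieAlgebra R L]
    {x₁ x₂ x₃ x₄ x₅ : L} (h43 : ⁅x₄, x₃⁆ = -x₁) (h52 : ⁅x₅, x₂⁆ = -x₁) (h54 : ⁅x₅, x₄⁆ = -x₂)
    (h12 : ⁅x₁, x₂⁆ = 0) (h13 : ⁅x₁, x₃⁆ = 0) (h14 : ⁅x₁, x₄⁆ = 0) (h15 : ⁅x₁, x₅⁆ = 0)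
    (h23 : ⁅x₂, x₃⁆ = 0) (h24 : ⁅x₂, x₄⁆ = 0) (h35 : ⁅x₃, x₅⁆ = 0) :
    N54Relations (ι R x₁ : UniversalEnvelopingAlgebra R L) (ι R x₂) (ι R x₃) (ι R x₄) (ι R x₅) := by
  have commute {x y : L} (h : ⁅x, y⁆ = 0) :
      Commute (ι R x : UniversalEnvelopingAlgebra R L) (ι R y) := by
    simpa [Commute, SemiconjBy, h] using ι_mul_ι x y
  have mul_eq {x y z : L} (h : ⁅x, y⁆ = -z) :
      (ι R x : UniversalEnvelopingAlgebra R L) * ι R y = ι R y * ι R x - ι R z := by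
    rw [ι_mul_ι, h, map_neg, sub_eq_add_neg]
  exact ⟨mul_eq h43, mul_eq h52, mul_eq h54, commute h12, commute h13, commute h14, commute h15,
    commute h23, commute h24, commute h35⟩

theorem stmt_14 {K : Type*} [Field K] [CharZero K]
    {L : Type*} [LieRing L] [LieAlgebra K L]
    (x1 x2 x3 x4 x5 : L)
    (h43 : ⁅x4, x3⁆ = -x1) (h52 : ⁅x5, x2⁆ = -x1) (h54 : ⁅x5, x4⁆ = -x2)
    (h12 : ⁅x1, x2⁆ = 0) (h13 : ⁅x1, x3⁆ = 0) (h14 : ⁅x1, x4⁆ = 0) (h15 : ⁅x1, x5⁆ = 0)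
    (h23 : ⁅x2, x3⁆ = 0) (h24 : ⁅x2, x4⁆ = 0) (h35 : ⁅x3, x5⁆ = 0)
    (j k l m n p q r s t : ℕ) :
    ((ι K x1 : UniversalEnvelopingAlgebra K L) ^ (j) * (ι K x2 : UniversalEnvelopingAlgebra K L) ^ (k) * (ι K x3 : UniversalEnvelopingAlgebra K L) ^ (l) * (ι K x4 : UniversalEnvelopingAlgebra K L) ^ (m) * (ι K x5 : UniversalEnvelopingAlgebra K L) ^ (n))
      * ((ι K x1 : UniversalEnvelopingAlgebra K L) ^ (p) * (ι K x2 : UniversalEnvelopingAlgebra K L) ^ (q) * (ι K x3 : UniversalEnvelopingAlgebra K L) ^ (r) * (ι K x4 : UniversalEnvelopingAlgebra K L) ^ (s) * (ι K x5 : UniversalEnvelopingAlgebra K L) ^ (t)) =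
      ∑ α ∈ Finset.range (min n q + 1),
      ∑ β1 ∈ Finset.range (s + 1), ∑ β2 ∈ Finset.range (s + 1),
        if β1 + β2 ≤ s ∧ β1 + 2 * β2 ≤ n - α then
          ∑ γ ∈ Finset.range (min m r + 1),
            ((-1 : K) ^ (α + β1 + γ) *
              ((n.choose α * q.choose α * s.choose (β1 + β2) * (n - α).choose (β1 + 2 * β2)
                * (β1 + β2).choose β1 * m.choose γ * r.choose γ
                * α.factorial * (β1 + 2 * β2).factorial * γ.factorial : ℕ) : K)
              / 2 ^ β2) •
              ((ι K x1 : UniversalEnvelopingAlgebra K L) ^ (j + p + α + β2 + γ) * (ι K x2 : UniversalEnvelopingAlgebra K L) ^ (k + q - α + β1)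
                * (ι K x3 : UniversalEnvelopingAlgebra K L) ^ (l + r - γ) * (ι K x4 : UniversalEnvelopingAlgebra K L) ^ (m + s - γ - β1 - β2)
                * (ι K x5 : UniversalEnvelopingAlgebra K L) ^ (n + t - α - β1 - 2 * β2))
        else 0 := by
  exact (N54Relations.of_lie h43 h52 h54 h12 h13 h14 h15 h23 h24 h35).monomial_mul_monomial j k l m n p q r s t
end
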